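/- The mirror-twisted N=2 Neveu-Schwarz algebra is not isomorphic (as a Lie superalgebra) to the N=2 Neveu-Schwarz algebra. -/

import Mathlib

/- STATEMENT 4: The mirror-twisted N=2 Neveu-Schwarz algebra is not isomorphic
(as a Lie superalgebra) to the N=2 Neveu-Schwarz algebra.  Both algebras are
modeled by their structure constants on bases (half-integer indices r = a+1/2
encoded by a ∈ ℤ).  An isomorphism would be a ℂ-linear equivalence commuting
with the (bilinearly extended) brackets and preserving the ℤ/2-grading; the
theorem asserts no such equivalence exists. -/

namespace Stmt4

namespace NS
inductive B : Type
  | d : B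
  | L : ℤ → B
  | J : ℤ → B
  | G1 : ℤ → B
  | G2 : ℤ → B
deriving DecidableEq

open B Complex

/-- Bilinear extension of a bracket given on basis elements. -/
noncomputable def extBr (br : B → B → (B →₀ ℂ)) (f g : B →₀ ℂ) : B →₀ ℂ :=
  f.sum fun a ca => g.sum fun b cb => (ca * cb) • br a b

/-- Structure constants of the N=2 Neveu-Schwarz algebra
(`G1 a` is `G⁽¹⁾_{a+1/2}`, `G2 a` is `G⁽²⁾_{a+1/2}`). -/
noncomputable def br : B → B → (B →₀ ℂ)
  | L m, L n =>
      Finsupp.single (L (m + n)) ((m : ℂ) - (n : ℂ))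
        + Finsupp.single d ((1/12 : ℂ) * ((m : ℂ)^3 - (m : ℂ)) *
            (if m + n = 0 then 1 else 0))
  | L m, J n => Finsupp.single (J (m + n)) (-(n : ℂ))
  | J n, L m => Finsupp.single (J (m + n)) ((n : ℂ))
  | J m, J n => Finsupp.single d ((1/3 : ℂ) * (m : ℂ) * (if m + n = 0 then 1 else 0))
  | L m, G1 a => Finsupp.single (G1 (m + a)) ((m : ℂ)/2 - ((a : ℂ) + 1/2))
  | G1 a, L m => Finsupp.single (G1 (m + a)) (-((m : ℂ)/2 - ((a : ℂ) + 1/2)))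
  | L m, G2 a => Finsupp.single (G2 (m + a)) ((m : ℂ)/2 - ((a : ℂ) + 1/2))
  | G2 a, L m => Finsupp.single (G2 (m + a)) (-((m : ℂ)/2 - ((a : ℂ) + 1/2)))
  | J m, G1 a => Finsupp.single (G2 (m + a)) (-Complex.I)
  | G1 a, J m => Finsupp.single (G2 (m + a)) (Complex.I)
  | J m, G2 a => Finsupp.single (G1 (m + a)) (Complex.I)
  | G2 a, J m => Finsupp.single (G1 (m + a)) (-Complex.I)
  | G1 a, G1 b =>
      Finsupp.single (L (a + b + 1)) (2 : ℂ)
        + Finsupp.single d ((1/3 : ℂ) * (((a : ℂ) + 1/2)^2 - 1/4) *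
            (if a + b + 1 = 0 then 1 else 0))
  | G2 a, G2 b =>
      Finsupp.single (L (a + b + 1)) (2 : ℂ)
        + Finsupp.single d ((1/3 : ℂ) * (((a : ℂ) + 1/2)^2 - 1/4) *
            (if a + b + 1 = 0 then 1 else 0))
  | G1 a, G2 b => Finsupp.single (J (a + b + 1)) (Complex.I * ((b : ℂ) - (a : ℂ)))
  | G2 a, G1 b => Finsupp.single (J (a + b + 1)) (Complex.I * ((a : ℂ) - (b : ℂ)))
  | _, _ => 0


/-- Parity of basis elements. -/
def par : B → ℕ
  | d => 0
  | L _ => 0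
  | J _ => 0
  | G1 _ => 1
  | G2 _ => 1

end NS

namespace Mir
inductive B : Type
  | d : B
  | L : ℤ → B
  | J : ℤ → B
  | G1 : ℤ → B
  | G2 : ℤ → B
deriving DecidableEq

open B

/-- Bilinear extension of a bracket given on basis elements. -/
noncomputable def extBr (br : B → B → (B →₀ ℂ)) (f g : B →₀ ℂ) : B →₀ ℂ :=
  f.sum fun a ca => g.sum fun b cb => (ca * cb) • br a b

/-- Parity of basis elements. -/
def par : B → ℕ
  | d => 0
  | L _ => 0
  | J _ => 0
  | G1 _ => 1
  | G2 _ => 1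

/-- Structure constants of the mirror-twisted N=2 Neveu-Schwarz algebra
(`J a` is `J_{a+1/2}`, `G1 a` is `G⁽¹⁾_{a+1/2}`, `G2 n` has n ∈ ℤ). -/
noncomputable def br : B → B → (B →₀ ℂ)
  | L m, L n =>
      Finsupp.single (L (m + n)) ((m : ℂ) - (n : ℂ))
        + Finsupp.single d ((1/12 : ℂ) * ((m : ℂ)^3 - (m : ℂ)) *
            (if m + n = 0 then 1 else 0))
  | L n, J a => Finsupp.single (J (n + a)) (-((a : ℂ) + 1/2))
  | J a, L n => Finsupp.single (J (n + a)) ((a : ℂ) + 1/2)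
  | J a, J b =>
      Finsupp.single d ((1/3 : ℂ) * ((a : ℂ) + 1/2) * (if a + b + 1 = 0 then 1 else 0))
  | L m, G1 a => Finsupp.single (G1 (m + a)) ((m : ℂ)/2 - ((a : ℂ) + 1/2))
  | G1 a, L m => Finsupp.single (G1 (m + a)) (-((m : ℂ)/2 - ((a : ℂ) + 1/2)))
  | L m, G2 n => Finsupp.single (G2 (m + n)) ((m : ℂ)/2 - (n : ℂ))
  | G2 n, L m => Finsupp.single (G2 (m + n)) (-((m : ℂ)/2 - (n : ℂ)))
  | G1 a, G1 b =>
      Finsupp.single (L (a + b + 1)) (2 : ℂ)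
        + Finsupp.single d ((1/3 : ℂ) * (((a : ℂ) + 1/2)^2 - 1/4) *
            (if a + b + 1 = 0 then 1 else 0))
  | G2 m, G2 n =>
      Finsupp.single (L (m + n)) (2 : ℂ)
        + Finsupp.single d ((1/3 : ℂ) * ((m : ℂ)^2 - 1/4) *
            (if m + n = 0 then 1 else 0))
  | G1 a, G2 n => Finsupp.single (J (a + n)) (-Complex.I * (((a : ℂ) + 1/2) - (n : ℂ)))
  | G2 n, G1 a => Finsupp.single (J (a + n)) (-Complex.I * (((a : ℂ) + 1/2) - (n : ℂ)))
  | J a, G1 b => Finsupp.single (G2 (a + b + 1)) (-Complex.I)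
  | G1 b, J a => Finsupp.single (G2 (a + b + 1)) (Complex.I)
  | J a, G2 n => Finsupp.single (G1 (a + n)) (Complex.I)
  | G2 n, J a => Finsupp.single (G1 (a + n)) (-Complex.I)
  | _, _ => 0


end Mir

open Finsupp

/-! The odd element `G⁽¹⁾_{1/2} + i G⁽²⁾_{1/2}` of the N=2 Neveu-Schwarz algebra squares to
zero, because `[G⁽¹⁾_{1/2}, G⁽²⁾_{1/2}] = 0` and `[G⁽²⁾_{1/2}, G⁽²⁾_{1/2}] = [G⁽¹⁾_{1/2}, G⁽¹⁾_{1/2}]`.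
In the mirror-twisted algebra the odd modes are `G⁽¹⁾_r` (`r ∈ ℤ + 1/2`) and `G⁽²⁾_n` (`n ∈ ℤ`), so
twice their mode numbers are pairwise distinct. If `y` is a nonzero odd element and `x` is the basis
vector of largest doubled mode `2k` in its support, the only bracket contributing to `L_k` in
`[y, y]` is `[x, x] = 2 L_k + …`, so `[y, y]` has `L_k`-coefficient `2 y(x)² ≠ 0`. -/

namespace NS

open B

lemma extBr_add_left (br : B → B → (B →₀ ℂ)) (f₁ f₂ g : B →₀ ℂ) :
    extBr br (f₁ + f₂) g = extBr br f₁ g + extBr br f₂ g :=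
  sum_add_index' (fun _ => by simp) fun _ _ _ => by
    simp only [add_mul, add_smul, sum_add]

lemma extBr_add_right (br : B → B → (B →₀ ℂ)) (f g₁ g₂ : B →₀ ℂ) :
    extBr br f (g₁ + g₂) = extBr br f g₁ + extBr br f g₂ := by
  rw [extBr, extBr, extBr, ← sum_add]
  refine sum_congr fun a _ => sum_add_index' (fun _ => by simp) fun _ _ _ => ?_
  simp only [mul_add, add_smul]

lemma extBr_single_single (br : B → B → (B →₀ ℂ)) (a b : B) (c c' : ℂ) :
    extBr br (single a c) (single b c') = (c * c') • br a b := by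
  simp [extBr]

noncomputable def nullOdd : B →₀ ℂ := single (G1 0) 1 + single (G2 0) Complex.I

lemma nullOdd_ne_zero : nullOdd ≠ 0 := fun h => by
  simpa [nullOdd] using DFunLike.congr_fun h (G1 0)

lemma par_of_mem_support_nullOdd {x : B} (hx : x ∈ nullOdd.support) : par x = 1 := by
  rcases Finset.mem_union.mp (support_add hx) with hx | hx <;>
    rw [Finset.mem_singleton.mp (support_single_subset hx)] <;> rfl

lemma extBr_nullOdd_self : extBr br nullOdd nullOdd = 0 := by
  simp only [nullOdd, extBr_add_left, extBr_add_right, extBr_single_single, br]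
  norm_num

end NS

namespace Mir

open B

def twiceMode : B → ℤ
  | G1 a => 2 * a + 1
  | G2 n => 2 * n
  | _ => 0

lemma twiceMode_injOn_odd : Set.InjOn twiceMode {b | par b = 1} := by
  intro a ha b hb h
  cases a <;> cases b <;> simp_all [par, twiceMode] <;> omega

lemma twiceMode_add_of_br_L_ne_zero {a b : B} (ha : par a = 1) {k : ℤ}
    (h : br a b (L k) ≠ 0) : twiceMode a + twiceMode b = 2 * k := by
  cases a <;> cases b <;> simp_all [par, br, twiceMode, single_apply] <;> omega

lemma br_self_L_twiceMode {a : B} (ha : par a = 1) : br a a (L (twiceMode a)) = 2 := by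
  cases a <;> simp_all [par, br, twiceMode, single_apply] <;> omega

lemma extBr_apply (br : B → B → (B →₀ ℂ)) (f g : B →₀ ℂ) (c : B) :
    extBr br f g c = ∑ a ∈ f.support, ∑ b ∈ g.support, f a * g b * br a b c := by
  simp [extBr, Finsupp.sum, smul_eq_mul]

lemma extBr_self_apply_L_twiceMode_of_max {y : B →₀ ℂ} (hodd : ∀ a ∈ y.support, par a = 1)
    {x : B} (hx : x ∈ y.support) (hmax : ∀ a ∈ y.support, twiceMode a ≤ twiceMode x) :
    extBr br y y (L (twiceMode x)) = 2 * y x ^ 2 := by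
  have hvanish : ∀ a ∈ y.support, ∀ b ∈ y.support, (a, b) ≠ (x, x) →
      br a b (L (twiceMode x)) = 0 := by
    intro a ha b hb hab
    by_contra hne
    have hsum := twiceMode_add_of_br_L_ne_zero (hodd a ha) hne
    have hab' : twiceMode a = twiceMode x ∧ twiceMode b = twiceMode x := by
      have := hmax a ha; have := hmax b hb; omega
    exact hab (Prod.ext (twiceMode_injOn_odd (hodd a ha) (hodd x hx) hab'.1)
      (twiceMode_injOn_odd (hodd b hb) (hodd x hx) hab'.2))
  rw [extBr_apply, Finset.sum_eq_single_of_mem x hx, Finset.sum_eq_single_of_mem x hx,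
    br_self_L_twiceMode (hodd x hx)]
  · ring
  · intro b hb hbx
    rw [hvanish x hx b hb (by simp [hbx]), mul_zero]
  · intro a ha hax
    exact Finset.sum_eq_zero fun b hb => by rw [hvanish a ha b hb (by simp [hax]), mul_zero]

lemma eq_zero_of_odd_of_extBr_self_eq_zero {y : B →₀ ℂ} (hodd : ∀ a ∈ y.support, par a = 1)
    (hy : extBr br y y = 0) : y = 0 := by
  by_contra hne
  obtain ⟨x, hx, hmax⟩ := y.support.exists_max_image twiceMode (support_nonempty_iff.mpr hne)
  have hcoeff := extBr_self_apply_L_twiceMode_of_max hodd hx hmax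
  rw [hy, Finsupp.zero_apply] at hcoeff
  exact mem_support_iff.mp hx (by simpa using hcoeff)

end Mir

theorem mirror_twisted_not_isomorphic_to_n2_neveu_schwarz :
    ¬ ∃ φ : (NS.B →₀ ℂ) ≃ₗ[ℂ] (Mir.B →₀ ℂ),
      (∀ f g : NS.B →₀ ℂ,
        φ (NS.extBr NS.br f g) = Mir.extBr Mir.br (φ f) (φ g)) ∧
      (∀ f : NS.B →₀ ℂ, (∀ x ∈ f.support, NS.par x = 0) →
        ∀ y ∈ (φ f).support, Mir.par y = 0) ∧
      (∀ f : NS.B →₀ ℂ, (∀ x ∈ f.support, NS.par x = 1) →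
        ∀ y ∈ (φ f).support, Mir.par y = 1) := by
  rintro ⟨φ, hbr, -, hodd⟩
  have hsq : Mir.extBr Mir.br (φ NS.nullOdd) (φ NS.nullOdd) = 0 := by
    rw [← hbr, NS.extBr_nullOdd_self, map_zero]
  have himage := Mir.eq_zero_of_odd_of_extBr_self_eq_zero
    (hodd _ fun _ => NS.par_of_mem_support_nullOdd) hsq
  exact NS.nullOdd_ne_zero (φ.map_eq_zero_iff.mp himage)

end Stmt4
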